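/- arXiv:1506.08520 — 2 statements merged into one kernel-verified Lean document; each statement's English description precedes it below -/
import Mathlib

section
/- Let (η, ϕ) be a smooth solution of the three-dimensional water-wave system on [0,T]. Then ∫₀ᵀ∬_Q (∂ₜη)·(x·∇ψ) dx dt = P − (1/2)∫₀ᵀ∭_{Ω(t)} |∇_{x,y}ϕ|² dy dx dt + ∫₀ᵀ∬_Q (x·∇η − η)·(∂ₜψ + gη) dx dt, where P := (1/2)∫₀ᵀ [ L₁∫₀^{L₂}∫₋ₕ^{η(t,L₁,x₂)} |∇_{x,y}ϕ(t,L₁,x₂,y)|² dy dx₂ + L₂∫₀^{L₁}∫₋ₕ^{η(t,x₁,L₂)} |∇_{x,y}ϕ(t,x₁,L₂,y)|² dy dx₁ + h∬_Q |∇_{x,y}ϕ(t,x,−h)|² dx ] dt. -/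
open Real Set MeasureTheory

noncomputable section

/-- `∂_{x₁}ϕ(t,x₁,x₂,y)` -/
def phiX1 (ϕ : ℝ → ℝ → ℝ → ℝ → ℝ) (t x₁ x₂ y : ℝ) : ℝ := deriv (fun s => ϕ t s x₂ y) x₁

/-- `∂_{x₂}ϕ(t,x₁,x₂,y)` -/
def phiX2 (ϕ : ℝ → ℝ → ℝ → ℝ → ℝ) (t x₁ x₂ y : ℝ) : ℝ := deriv (fun s => ϕ t x₁ s y) x₂

/-- `∂_yϕ(t,x₁,x₂,y)` -/
def phiY3 (ϕ : ℝ → ℝ → ℝ → ℝ → ℝ) (t x₁ x₂ y : ℝ) : ℝ := deriv (fun s => ϕ t x₁ x₂ s) y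

/-- `∂ₜϕ(t,x₁,x₂,y)` -/
def phiT3 (ϕ : ℝ → ℝ → ℝ → ℝ → ℝ) (t x₁ x₂ y : ℝ) : ℝ := deriv (fun s => ϕ s x₁ x₂ y) t

/-- `|∇_{x,y}ϕ|²(t,x₁,x₂,y)` -/
def gradSq3 (ϕ : ℝ → ℝ → ℝ → ℝ → ℝ) (t x₁ x₂ y : ℝ) : ℝ :=
  (phiX1 ϕ t x₁ x₂ y) ^ 2 + (phiX2 ϕ t x₁ x₂ y) ^ 2 + (phiY3 ϕ t x₁ x₂ y) ^ 2

/-- `|∇ₓϕ|²(t,x₁,x₂,y)` (horizontal gradient) -/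
def gradXSq3 (ϕ : ℝ → ℝ → ℝ → ℝ → ℝ) (t x₁ x₂ y : ℝ) : ℝ :=
  (phiX1 ϕ t x₁ x₂ y) ^ 2 + (phiX2 ϕ t x₁ x₂ y) ^ 2

/-- `∂_{x₁}η(t,x₁,x₂)` -/
def etaX1 (η : ℝ → ℝ → ℝ → ℝ) (t x₁ x₂ : ℝ) : ℝ := deriv (fun s => η t s x₂) x₁

/-- `∂_{x₂}η(t,x₁,x₂)` -/
def etaX2 (η : ℝ → ℝ → ℝ → ℝ) (t x₁ x₂ : ℝ) : ℝ := deriv (fun s => η t x₁ s) x₂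

/-- `∂ₜη(t,x₁,x₂)` -/
def etaT3 (η : ℝ → ℝ → ℝ → ℝ) (t x₁ x₂ : ℝ) : ℝ := deriv (fun s => η s x₁ x₂) t

/-- the trace `ψ(t,x) = ϕ(t,x,η(t,x))` -/
def psi3 (η : ℝ → ℝ → ℝ → ℝ) (ϕ : ℝ → ℝ → ℝ → ℝ → ℝ) (t x₁ x₂ : ℝ) : ℝ :=
  ϕ t x₁ x₂ (η t x₁ x₂)

/-- `∂ₜψ(t,x₁,x₂)` -/
def psi3T (η : ℝ → ℝ → ℝ → ℝ) (ϕ : ℝ → ℝ → ℝ → ℝ → ℝ) (t x₁ x₂ : ℝ) : ℝ :=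
  deriv (fun s => psi3 η ϕ s x₁ x₂) t

/-- `∂_{x₁}ψ(t,x₁,x₂)` -/
def psi3X1 (η : ℝ → ℝ → ℝ → ℝ) (ϕ : ℝ → ℝ → ℝ → ℝ → ℝ) (t x₁ x₂ : ℝ) : ℝ :=
  deriv (fun s => psi3 η ϕ t s x₂) x₁

/-- `∂_{x₂}ψ(t,x₁,x₂)` -/
def psi3X2 (η : ℝ → ℝ → ℝ → ℝ) (ϕ : ℝ → ℝ → ℝ → ℝ → ℝ) (t x₁ x₂ : ℝ) : ℝ :=
  deriv (fun s => psi3 η ϕ t x₁ s) x₂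

/-- `Θ(t,x) = -η ∂ₜψ - (g/2) η²` -/
def Theta3 (g : ℝ) (η : ℝ → ℝ → ℝ → ℝ) (ϕ : ℝ → ℝ → ℝ → ℝ → ℝ) (t x₁ x₂ : ℝ) : ℝ :=
  -(η t x₁ x₂) * psi3T η ϕ t x₁ x₂ - g / 2 * (η t x₁ x₂) ^ 2

/-- the energy `𝓗(t)` -/
def energy3D (L₁ L₂ h g : ℝ) (η : ℝ → ℝ → ℝ → ℝ) (ϕ : ℝ → ℝ → ℝ → ℝ → ℝ) (t : ℝ) : ℝ :=
  g / 2 * (∫ x₁ in (0:ℝ)..L₁, ∫ x₂ in (0:ℝ)..L₂, (η t x₁ x₂) ^ 2)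
    + 1 / 2 * ∫ x₁ in (0:ℝ)..L₁, ∫ x₂ in (0:ℝ)..L₂, ∫ y in (-h)..(η t x₁ x₂),
        gradSq3 ϕ t x₁ x₂ y

/-- the boundary observation `𝓑(T)` -/
def bigB (L₁ L₂ g T : ℝ) (η : ℝ → ℝ → ℝ → ℝ) (ϕ : ℝ → ℝ → ℝ → ℝ → ℝ) : ℝ :=
  ∫ t in (0:ℝ)..T,
    (L₁ * (∫ x₂ in (0:ℝ)..L₂, Theta3 g η ϕ t L₁ x₂)
      + L₂ * ∫ x₁ in (0:ℝ)..L₁, Theta3 g η ϕ t x₁ L₂)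

/-- the positive boundary term `P` -/
def bigP (L₁ L₂ h T : ℝ) (η : ℝ → ℝ → ℝ → ℝ) (ϕ : ℝ → ℝ → ℝ → ℝ → ℝ) : ℝ :=
  1 / 2 * ∫ t in (0:ℝ)..T,
    (L₁ * (∫ x₂ in (0:ℝ)..L₂, ∫ y in (-h)..(η t L₁ x₂), gradSq3 ϕ t L₁ x₂ y)
      + L₂ * (∫ x₁ in (0:ℝ)..L₁, ∫ y in (-h)..(η t x₁ L₂), gradSq3 ϕ t x₁ L₂ y)
      + h * ∫ x₁ in (0:ℝ)..L₁, ∫ x₂ in (0:ℝ)..L₂, gradSq3 ϕ t x₁ x₂ (-h))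

/-- A smooth solution of the three-dimensional water-wave system on `[0,T]`,
in the tank over `Q = [0,L₁] × [0,L₂]`. -/
structure IsWW3D (L₁ L₂ h g T : ℝ) (η : ℝ → ℝ → ℝ → ℝ)
    (ϕ : ℝ → ℝ → ℝ → ℝ → ℝ) : Prop where
  smooth_eta : ContDiff ℝ (⊤ : ℕ∞) (fun p : ℝ × ℝ × ℝ => η p.1 p.2.1 p.2.2)
  smooth_phi : ContDiff ℝ (⊤ : ℕ∞) (fun p : ℝ × ℝ × ℝ × ℝ => ϕ p.1 p.2.1 p.2.2.1 p.2.2.2)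
  eta_lower : ∀ t ∈ Icc (0:ℝ) T, ∀ x₁ ∈ Icc (0:ℝ) L₁, ∀ x₂ ∈ Icc (0:ℝ) L₂,
    -h / 2 ≤ η t x₁ x₂
  eta_mean : ∀ t ∈ Icc (0:ℝ) T,
    (∫ x₁ in (0:ℝ)..L₁, ∫ x₂ in (0:ℝ)..L₂, η t x₁ x₂) = 0
  laplace : ∀ t ∈ Icc (0:ℝ) T, ∀ x₁ ∈ Icc (0:ℝ) L₁, ∀ x₂ ∈ Icc (0:ℝ) L₂,
    ∀ y ∈ Icc (-h) (η t x₁ x₂),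
      deriv (fun s => phiX1 ϕ t s x₂ y) x₁ + deriv (fun s => phiX2 ϕ t x₁ s y) x₂
        + deriv (fun s => phiY3 ϕ t x₁ x₂ s) y = 0
  bc_x1 : ∀ t ∈ Icc (0:ℝ) T, ∀ x₁ ∈ ({0, L₁} : Set ℝ), ∀ x₂ ∈ Icc (0:ℝ) L₂,
    ∀ y ∈ Icc (-h) (η t x₁ x₂), phiX1 ϕ t x₁ x₂ y = 0
  bc_x2 : ∀ t ∈ Icc (0:ℝ) T, ∀ x₂ ∈ ({0, L₂} : Set ℝ), ∀ x₁ ∈ Icc (0:ℝ) L₁,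
    ∀ y ∈ Icc (-h) (η t x₁ x₂), phiX2 ϕ t x₁ x₂ y = 0
  bc_bottom : ∀ t ∈ Icc (0:ℝ) T, ∀ x₁ ∈ Icc (0:ℝ) L₁, ∀ x₂ ∈ Icc (0:ℝ) L₂,
    phiY3 ϕ t x₁ x₂ (-h) = 0
  kinematic : ∀ t ∈ Icc (0:ℝ) T, ∀ x₁ ∈ Icc (0:ℝ) L₁, ∀ x₂ ∈ Icc (0:ℝ) L₂,
    etaT3 η t x₁ x₂
      = phiY3 ϕ t x₁ x₂ (η t x₁ x₂)
        - (etaX1 η t x₁ x₂ * phiX1 ϕ t x₁ x₂ (η t x₁ x₂)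
            + etaX2 η t x₁ x₂ * phiX2 ϕ t x₁ x₂ (η t x₁ x₂))
  bernoulli : ∀ t ∈ Icc (0:ℝ) T, ∀ x₁ ∈ Icc (0:ℝ) L₁, ∀ x₂ ∈ Icc (0:ℝ) L₂,
    phiT3 ϕ t x₁ x₂ (η t x₁ x₂)
      + 1 / 2 * ((phiX1 ϕ t x₁ x₂ (η t x₁ x₂)) ^ 2
          + (phiX2 ϕ t x₁ x₂ (η t x₁ x₂)) ^ 2 + (phiY3 ϕ t x₁ x₂ (η t x₁ x₂)) ^ 2)
      + g * η t x₁ x₂ = 0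
  etaX1_bc : ∀ t ∈ Icc (0:ℝ) T, ∀ x₁ ∈ ({0, L₁} : Set ℝ), ∀ x₂ ∈ Icc (0:ℝ) L₂,
    etaX1 η t x₁ x₂ = 0
  etaX2_bc : ∀ t ∈ Icc (0:ℝ) T, ∀ x₂ ∈ ({0, L₂} : Set ℝ), ∀ x₁ ∈ Icc (0:ℝ) L₁,
    etaX2 η t x₁ x₂ = 0

/-!
At each time the Rellich–Pohozaev multiplier `X·∇ϕ`, `X = (x, y)`, is applied to the harmonic
potential: the field `(X·∇ϕ)∇ϕ - ½|∇ϕ|² X` has divergence `(X·∇ϕ)Δϕ - ½|∇ϕ|² = -½|∇ϕ|²`, so its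
flux through `∂Ω(t)` is `-½∫_{Ω(t)} |∇ϕ|²`. By the Neumann conditions the flux vanishes through
`x₁ = 0`, `x₂ = 0`, and equals `-½ L₁∫|∇ϕ|²`, `-½ L₂∫|∇ϕ|²`, `-½ h∫|∇ϕ|²` through `x₁ = L₁`,
`x₂ = L₂`, `y = -h`. Through the free surface, the kinematic and Bernoulli conditions turn it into
`∂ₜη (x·∇ψ) - (x·∇η - η)(∂ₜψ + gη)`. Integrating in time gives the identity. The divergence
theorem on `Ω(t)` is proved column by column, differentiating `∫_{-h}^{η}` with its moving endpoint.
-/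

open Function
open scoped ContDiff

namespace WaterWaves

abbrev uncurry₃ (u : ℝ → ℝ → ℝ → ℝ) : ℝ × ℝ × ℝ → ℝ := fun p => u p.1 p.2.1 p.2.2

def d₁ (F : ℝ → ℝ → ℝ) (x y : ℝ) : ℝ := deriv (fun s => F s y) x
def d₂ (F : ℝ → ℝ → ℝ) (x y : ℝ) : ℝ := deriv (fun s => F x s) y

def D₁ (u : ℝ → ℝ → ℝ → ℝ) (x y z : ℝ) : ℝ := deriv (fun s => u s y z) x
def D₂ (u : ℝ → ℝ → ℝ → ℝ) (x y z : ℝ) : ℝ := deriv (fun s => u x s z) y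
def D₃ (u : ℝ → ℝ → ℝ → ℝ) (x y z : ℝ) : ℝ := deriv (fun s => u x y s) z

theorem contDiff_deriv_param {X : Type*} [NormedAddCommGroup X] [NormedSpace ℝ X]
    {n : WithTop ℕ∞} {f : X → ℝ → ℝ} {g : X → ℝ} (hf : ContDiff ℝ (n + 1) (uncurry f))
    (hg : ContDiff ℝ n g) : ContDiff ℝ n fun x => deriv (f x) (g x) :=
  (hf.fderiv hg le_rfl).clm_apply contDiff_const

theorem fderiv_fderiv_apply_comm {E : Type*} [NormedAddCommGroup E] [NormedSpace ℝ E]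
    {U : E → ℝ} (hU : ContDiff ℝ 2 U) (p v w : E) :
    fderiv ℝ (fun q => fderiv ℝ U q w) p v = fderiv ℝ (fun q => fderiv ℝ U q v) p w := by
  have hU' : Differentiable ℝ (fderiv ℝ U) := (hU.fderiv_right le_rfl).differentiable one_ne_zero
  rw [fderiv_clm_apply (hU' p) (differentiableAt_const w),
    fderiv_clm_apply (hU' p) (differentiableAt_const v)]
  simpa using (hU.contDiffAt.isSymmSndFDerivAt (by simp)).eq v w

section TwoVariables

variable {F : ℝ → ℝ → ℝ}

theorem d₁_eq_fderiv {x y : ℝ} (hF : DifferentiableAt ℝ (uncurry F) (x, y)) :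
    d₁ F x y = fderiv ℝ (uncurry F) (x, y) (1, 0) :=
  (hF.hasFDerivAt.comp_hasDerivAt (f := fun s => (s, y)) x
    ((hasDerivAt_id' x).prodMk (hasDerivAt_const x y))).deriv

theorem d₂_eq_fderiv {x y : ℝ} (hF : DifferentiableAt ℝ (uncurry F) (x, y)) :
    d₂ F x y = fderiv ℝ (uncurry F) (x, y) (0, 1) :=
  (hF.hasFDerivAt.comp_hasDerivAt (f := fun s => (x, s)) y
    ((hasDerivAt_const y x).prodMk (hasDerivAt_id' y))).deriv

theorem hasDerivAt_comp_graph (hF : Differentiable ℝ (uncurry F)) {k : ℝ → ℝ} {k' s : ℝ}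
    (hk : HasDerivAt k k' s) :
    HasDerivAt (fun r => F r (k r)) (d₁ F s (k s) + k' * d₂ F s (k s)) s := by
  have h := (hF (s, k s)).hasFDerivAt.comp_hasDerivAt s ((hasDerivAt_id' s).prodMk hk)
  rw [show ((1 : ℝ), k') = (1, 0) + k' • (0, 1) by simp, map_add, map_smul, smul_eq_mul,
    ← d₁_eq_fderiv (hF _), ← d₂_eq_fderiv (hF _)] at h
  exact h

theorem d₁_d₂_comm (hF : ContDiff ℝ 2 (uncurry F)) (x y : ℝ) : d₁ (d₂ F) x y = d₂ (d₁ F) x y := by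
  have hF' : Differentiable ℝ (uncurry F) := hF.differentiable two_ne_zero
  have hdF : ∀ v, Differentiable ℝ fun q => fderiv ℝ (uncurry F) q v := fun v =>
    ((hF.fderiv_right le_rfl).clm_apply contDiff_const).differentiable one_ne_zero
  have h₁ : d₁ F = fun a b => fderiv ℝ (uncurry F) (a, b) (1, 0) := by
    funext a b; exact d₁_eq_fderiv (hF' _)
  have h₂ : d₂ F = fun a b => fderiv ℝ (uncurry F) (a, b) (0, 1) := by
    funext a b; exact d₂_eq_fderiv (hF' _)
  rw [h₁, h₂, d₁_eq_fderiv (hdF _ _), d₂_eq_fderiv (hdF _ _)]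
  exact fderiv_fderiv_apply_comm hF _ _ _

theorem continuous_d₁ (hF : ContDiff ℝ 1 (uncurry F)) : Continuous (uncurry (d₁ F)) :=
  (contDiff_deriv_param (n := 0) (f := fun (p : ℝ × ℝ) s => F s p.2) (by fun_prop)
    contDiff_fst).continuous

theorem continuous_d₂ (hF : ContDiff ℝ 1 (uncurry F)) : Continuous (uncurry (d₂ F)) :=
  (contDiff_deriv_param (n := 0) (f := fun (p : ℝ × ℝ) s => F p.1 s) (by fun_prop)
    contDiff_snd).continuous

end TwoVariables

section ThreeVariables

variable {u : ℝ → ℝ → ℝ → ℝ}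

theorem contDiff_D₁ {n : WithTop ℕ∞} (hu : ContDiff ℝ (n + 1) (uncurry₃ u)) :
    ContDiff ℝ n (uncurry₃ (D₁ u)) :=
  contDiff_deriv_param (f := fun (p : ℝ × ℝ × ℝ) s => u s p.2.1 p.2.2) (by fun_prop)
    contDiff_fst

theorem contDiff_D₂ {n : WithTop ℕ∞} (hu : ContDiff ℝ (n + 1) (uncurry₃ u)) :
    ContDiff ℝ n (uncurry₃ (D₂ u)) :=
  contDiff_deriv_param (f := fun (p : ℝ × ℝ × ℝ) s => u p.1 s p.2.2) (by fun_prop)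
    contDiff_snd.fst

theorem contDiff_D₃ {n : WithTop ℕ∞} (hu : ContDiff ℝ (n + 1) (uncurry₃ u)) :
    ContDiff ℝ n (uncurry₃ (D₃ u)) :=
  contDiff_deriv_param (f := fun (p : ℝ × ℝ × ℝ) s => u p.1 p.2.1 s) (by fun_prop)
    contDiff_snd.snd

theorem hasDerivAt_D₁ (hu : Differentiable ℝ (uncurry₃ u)) (x y z : ℝ) :
    HasDerivAt (fun s => u s y z) (D₁ u x y z) x :=
  ((hu.comp (f := fun s : ℝ => (s, y, z)) (by fun_prop)) x).hasDerivAt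

theorem hasDerivAt_D₂ (hu : Differentiable ℝ (uncurry₃ u)) (x y z : ℝ) :
    HasDerivAt (fun s => u x s z) (D₂ u x y z) y :=
  ((hu.comp (f := fun s : ℝ => (x, s, z)) (by fun_prop)) y).hasDerivAt

theorem hasDerivAt_D₃ (hu : Differentiable ℝ (uncurry₃ u)) (x y z : ℝ) :
    HasDerivAt (fun s => u x y s) (D₃ u x y z) z :=
  ((hu.comp (f := fun s : ℝ => (x, y, s)) (by fun_prop)) z).hasDerivAt

end ThreeVariables

section Flux

variable {u : ℝ → ℝ → ℝ → ℝ}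

def gradSq (u : ℝ → ℝ → ℝ → ℝ) (x y z : ℝ) : ℝ :=
  D₁ u x y z ^ 2 + D₂ u x y z ^ 2 + D₃ u x y z ^ 2

def radialDeriv (u : ℝ → ℝ → ℝ → ℝ) (x y z : ℝ) : ℝ :=
  x * D₁ u x y z + y * D₂ u x y z + z * D₃ u x y z

/- The components of the Rellich–Pohozaev field `(X·∇u) ∇u - ½ |∇u|² X`, with `X = (x, y, z)`. -/
def flux₁ (u : ℝ → ℝ → ℝ → ℝ) (x y z : ℝ) : ℝ :=
  radialDeriv u x y z * D₁ u x y z - 1 / 2 * gradSq u x y z * x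

def flux₂ (u : ℝ → ℝ → ℝ → ℝ) (x y z : ℝ) : ℝ :=
  radialDeriv u x y z * D₂ u x y z - 1 / 2 * gradSq u x y z * y

def flux₃ (u : ℝ → ℝ → ℝ → ℝ) (x y z : ℝ) : ℝ :=
  radialDeriv u x y z * D₃ u x y z - 1 / 2 * gradSq u x y z * z

theorem contDiff_flux {n : WithTop ℕ∞} (hu : ContDiff ℝ (n + 1) (uncurry₃ u)) :
    ContDiff ℝ n (uncurry₃ (flux₁ u)) ∧ ContDiff ℝ n (uncurry₃ (flux₂ u)) ∧
      ContDiff ℝ n (uncurry₃ (flux₃ u)) := by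
  have := contDiff_D₁ hu
  have := contDiff_D₂ hu
  have := contDiff_D₃ hu
  unfold flux₁ flux₂ flux₃ radialDeriv gradSq
  exact ⟨by fun_prop, by fun_prop, by fun_prop⟩

theorem div_flux (hu : ContDiff ℝ 2 (uncurry₃ u)) (x y z : ℝ) :
    D₁ (flux₁ u) x y z + D₂ (flux₂ u) x y z + D₃ (flux₃ u) x y z
      = radialDeriv u x y z * (D₁ (D₁ u) x y z + D₂ (D₂ u) x y z + D₃ (D₃ u) x y z)
        - 1 / 2 * gradSq u x y z := by
  have h₁ := (contDiff_D₁ (n := 1) hu).differentiable one_ne_zero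
  have h₂ := (contDiff_D₂ (n := 1) hu).differentiable one_ne_zero
  have h₃ := (contDiff_D₃ (n := 1) hu).differentiable one_ne_zero
  have k₁ := show D₁ (flux₁ u) x y z = _ from
    have a₁ := hasDerivAt_D₁ h₁ x y z
    have a₂ := hasDerivAt_D₁ h₂ x y z
    have a₃ := hasDerivAt_D₁ h₃ x y z
    ((((hasDerivAt_id' x).mul a₁).add (a₂.const_mul y)).add (a₃.const_mul z) |>.mul a₁).sub
      (((a₁.pow 2).add (a₂.pow 2)).add (a₃.pow 2) |>.const_mul (1 / 2) |>.mul (hasDerivAt_id' x))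
      |>.deriv
  have k₂ := show D₂ (flux₂ u) x y z = _ from
    have a₁ := hasDerivAt_D₂ h₁ x y z
    have a₂ := hasDerivAt_D₂ h₂ x y z
    have a₃ := hasDerivAt_D₂ h₃ x y z
    (((a₁.const_mul x).add ((hasDerivAt_id' y).mul a₂)).add (a₃.const_mul z) |>.mul a₂).sub
      (((a₁.pow 2).add (a₂.pow 2)).add (a₃.pow 2) |>.const_mul (1 / 2) |>.mul (hasDerivAt_id' y))
      |>.deriv
  have k₃ := show D₃ (flux₃ u) x y z = _ from
    have a₁ := hasDerivAt_D₃ h₁ x y z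
    have a₂ := hasDerivAt_D₃ h₂ x y z
    have a₃ := hasDerivAt_D₃ h₃ x y z
    (((a₁.const_mul x).add (a₂.const_mul y)).add ((hasDerivAt_id' z).mul a₃) |>.mul a₃).sub
      (((a₁.pow 2).add (a₂.pow 2)).add (a₃.pow 2) |>.const_mul (1 / 2) |>.mul (hasDerivAt_id' z))
      |>.deriv
  have s₁₂ : D₁ (D₂ u) x y z = D₂ (D₁ u) x y z :=
    d₁_d₂_comm (F := fun a b => u a b z) (by fun_prop) x y
  have s₁₃ : D₁ (D₃ u) x y z = D₃ (D₁ u) x y z :=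
    d₁_d₂_comm (F := fun a c => u a y c) (by fun_prop) x z
  have s₂₃ : D₂ (D₃ u) x y z = D₃ (D₂ u) x y z :=
    d₁_d₂_comm (F := fun b c => u x b c) (by fun_prop) y z
  rw [k₁, k₂, k₃, s₁₂, s₁₃, s₂₃]
  simp only [radialDeriv, gradSq, Pi.add_apply, Pi.mul_apply, Pi.pow_apply]
  ring

end Flux

section Integrals

variable {f g : ℝ → ℝ → ℝ} {a b c d : ℝ}

theorem integral_integral_swap_of_continuous (hf : Continuous (uncurry f)) (hab : a ≤ b)
    (hcd : c ≤ d) :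
    ∫ x in a..b, ∫ y in c..d, f x y = ∫ y in c..d, ∫ x in a..b, f x y := by
  have hint : Integrable (uncurry f)
      ((volume.restrict (Ioc a b)).prod (volume.restrict (Ioc c d))) := by
    rw [Measure.prod_restrict]
    exact (hf.continuousOn.integrableOn_compact (isCompact_Icc.prod isCompact_Icc)).mono_set
      (prod_mono Ioc_subset_Icc_self Ioc_subset_Icc_self)
  simp only [intervalIntegral.integral_of_le hab, intervalIntegral.integral_of_le hcd]
  exact integral_integral_swap hint

theorem integral_integral_add (hf : Continuous (uncurry f)) (hg : Continuous (uncurry g)) :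
    ∫ x in a..b, ∫ y in c..d, (f x y + g x y)
      = (∫ x in a..b, ∫ y in c..d, f x y) + ∫ x in a..b, ∫ y in c..d, g x y := by
  rw [← intervalIntegral.integral_add (Continuous.intervalIntegrable (by fun_prop) _ _)
    (Continuous.intervalIntegrable (by fun_prop) _ _)]
  exact intervalIntegral.integral_congr fun x _ => intervalIntegral.integral_add
    (Continuous.intervalIntegrable (by fun_prop) _ _)
    (Continuous.intervalIntegrable (by fun_prop) _ _)

theorem integral_integral_sub (hf : Continuous (uncurry f)) (hg : Continuous (uncurry g)) :
    ∫ x in a..b, ∫ y in c..d, (f x y - g x y)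
      = (∫ x in a..b, ∫ y in c..d, f x y) - ∫ x in a..b, ∫ y in c..d, g x y := by
  rw [← intervalIntegral.integral_sub (Continuous.intervalIntegrable (by fun_prop) _ _)
    (Continuous.intervalIntegrable (by fun_prop) _ _)]
  exact intervalIntegral.integral_congr fun x _ => intervalIntegral.integral_sub
    (Continuous.intervalIntegrable (by fun_prop) _ _)
    (Continuous.intervalIntegrable (by fun_prop) _ _)

theorem integral_integral_const_mul (r : ℝ) :
    ∫ x in a..b, ∫ y in c..d, r * f x y = r * ∫ x in a..b, ∫ y in c..d, f x y := by
  simp only [intervalIntegral.integral_const_mul]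

theorem integral_integral_congr (hab : a ≤ b) (hcd : c ≤ d)
    (h : ∀ x ∈ Icc a b, ∀ y ∈ Icc c d, f x y = g x y) :
    ∫ x in a..b, ∫ y in c..d, f x y = ∫ x in a..b, ∫ y in c..d, g x y :=
  intervalIntegral.integral_congr fun x hx => intervalIntegral.integral_congr fun y hy =>
    h x (uIcc_of_le hab ▸ hx) y (uIcc_of_le hcd ▸ hy)

end Integrals

section Leibniz

theorem integral_sub_integral_eq_integral_param {H H' : ℝ → ℝ → ℝ} (hH : Continuous (uncurry H))
    (hH' : Continuous (uncurry H')) (hderiv : ∀ x s, HasDerivAt (fun r => H r s) (H' x s) x)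
    {x₀ x₁ c d : ℝ} (hx : x₀ ≤ x₁) (hcd : c ≤ d) :
    (∫ s in c..d, H x₁ s) - ∫ s in c..d, H x₀ s = ∫ x in x₀..x₁, ∫ s in c..d, H' x s := by
  have hFTC : ∀ s, H x₁ s - H x₀ s = ∫ x in x₀..x₁, H' x s := fun s =>
    (intervalIntegral.integral_eq_sub_of_hasDerivAt (fun x _ => hderiv x s)
      (Continuous.intervalIntegrable (by fun_prop) _ _)).symm
  rw [← intervalIntegral.integral_sub (Continuous.intervalIntegrable (by fun_prop) _ _)
    (Continuous.intervalIntegrable (by fun_prop) _ _)]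
  simp_rw [hFTC]
  exact integral_integral_swap_of_continuous (f := fun s x => H' x s) (by fun_prop) hcd hx

theorem integral_eq_integral_unitInterval (f : ℝ → ℝ) (a b : ℝ) :
    ∫ y in a..b, f y = ∫ s in (0:ℝ)..1, (b - a) * f ((b - a) * s + a) := by
  rw [intervalIntegral.integral_const_mul, ← smul_eq_mul,
    intervalIntegral.smul_integral_comp_mul_add]
  simp

theorem integral_unitInterval_d₂_eq {G : ℝ → ℝ → ℝ} (hG : ContDiff ℝ 1 (uncurry G))
    (x w a : ℝ) :
    ∫ s in (0:ℝ)..1, (G x (w * s + a) + s * (w * d₂ G x (w * s + a))) = G x (w + a) := by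
  have hs : ∀ s ∈ uIcc (0:ℝ) 1, HasDerivAt (fun s => s * G x (w * s + a))
      (G x (w * s + a) + s * (w * d₂ G x (w * s + a))) s := by
    intro s _
    have hGy : HasDerivAt (G x) (d₂ G x (w * s + a)) (w * s + a) :=
      (((hG.differentiable one_ne_zero).comp (f := fun y : ℝ => (x, y)) (by fun_prop)) _).hasDerivAt
    refine ((hasDerivAt_id' s).mul
      (hGy.comp s (((hasDerivAt_id' s).const_mul w).add_const a))).congr_deriv ?_
    simp only [Function.comp_apply]
    ring
  have : Continuous (uncurry (d₂ G)) := continuous_d₂ hG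
  rw [intervalIntegral.integral_eq_sub_of_hasDerivAt hs
    (Continuous.intervalIntegrable (by fun_prop) _ _)]
  simp

theorem leibniz_integral_rule {G : ℝ → ℝ → ℝ} (hG : ContDiff ℝ 1 (uncurry G))
    {n : ℝ → ℝ} (hn : ContDiff ℝ 1 n) (a : ℝ) {x₀ x₁ : ℝ} (hx : x₀ ≤ x₁) :
    (∫ y in a..n x₁, G x₁ y) - ∫ y in a..n x₀, G x₀ y
      = ∫ x in x₀..x₁, ((∫ y in a..n x, d₁ G x y) + deriv n x * G x (n x)) := by
  have hGd : Differentiable ℝ (uncurry G) := hG.differentiable one_ne_zero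
  have hd₁ := continuous_d₁ hG
  have hd₂ := continuous_d₂ hG
  have hn' : Continuous (deriv n) := hn.continuous_deriv le_rfl
  have hnc : Continuous n := hn.continuous
  -- after the substitution `y = (n x - a) s + a` the `s`-interval no longer depends on `x`
  set H' : ℝ → ℝ → ℝ := fun x s => (n x - a) * d₁ G x ((n x - a) * s + a)
    + deriv n x * (G x ((n x - a) * s + a) + s * ((n x - a) * d₂ G x ((n x - a) * s + a)))
    with hH'
  have hderiv : ∀ x s, HasDerivAt (fun r => (n r - a) * G r ((n r - a) * s + a)) (H' x s) x := by
    intro x s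
    have hw := ((hn.differentiable one_ne_zero) x).hasDerivAt.sub_const a
    refine (hw.mul (hasDerivAt_comp_graph hGd ((hw.mul_const s).add_const a))).congr_deriv ?_
    simp only [hH']
    ring
  have inner : ∀ x,
      ∫ s in (0:ℝ)..1, H' x s = (∫ y in a..n x, d₁ G x y) + deriv n x * G x (n x) := by
    intro x
    rw [hH', intervalIntegral.integral_add (Continuous.intervalIntegrable (by fun_prop) _ _)
      (Continuous.intervalIntegrable (by fun_prop) _ _)]
    simp only [intervalIntegral.integral_const_mul]
    rw [integral_unitInterval_d₂_eq hG, integral_eq_integral_unitInterval (d₁ G x) a (n x),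
      intervalIntegral.integral_const_mul, sub_add_cancel]
  calc (∫ y in a..n x₁, G x₁ y) - ∫ y in a..n x₀, G x₀ y
      = (∫ s in (0:ℝ)..1, (n x₁ - a) * G x₁ ((n x₁ - a) * s + a))
          - ∫ s in (0:ℝ)..1, (n x₀ - a) * G x₀ ((n x₀ - a) * s + a) := by
        rw [integral_eq_integral_unitInterval (G x₁), integral_eq_integral_unitInterval (G x₀)]
    _ = ∫ x in x₀..x₁, ∫ s in (0:ℝ)..1, H' x s :=
        integral_sub_integral_eq_integral_param
          (H := fun x s => (n x - a) * G x ((n x - a) * s + a))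
          (by fun_prop) (by fun_prop) hderiv hx zero_le_one
    _ = _ := intervalIntegral.integral_congr fun x _ => inner x

end Leibniz

section Pohozaev

variable {u : ℝ → ℝ → ℝ → ℝ} {N : ℝ → ℝ → ℝ}

def trace (u : ℝ → ℝ → ℝ → ℝ) (N : ℝ → ℝ → ℝ) (x₁ x₂ : ℝ) : ℝ := u x₁ x₂ (N x₁ x₂)

/- `∂_y u - ∇N · ∇ₓu` on the graph `y = N x`, i.e. `√(1 + |∇N|²)` times the normal derivative. -/
def normalDeriv (u : ℝ → ℝ → ℝ → ℝ) (N : ℝ → ℝ → ℝ) (x₁ x₂ : ℝ) : ℝ :=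
  D₃ u x₁ x₂ (N x₁ x₂)
    - (d₁ N x₁ x₂ * D₁ u x₁ x₂ (N x₁ x₂) + d₂ N x₁ x₂ * D₂ u x₁ x₂ (N x₁ x₂))

theorem d₁_trace (hu : Differentiable ℝ (uncurry₃ u)) (hN : Differentiable ℝ (uncurry N))
    (x₁ x₂ : ℝ) :
    d₁ (trace u N) x₁ x₂ = D₁ u x₁ x₂ (N x₁ x₂) + d₁ N x₁ x₂ * D₃ u x₁ x₂ (N x₁ x₂) :=
  (hasDerivAt_comp_graph (F := fun r y => u r x₂ y) (by fun_prop)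
    ((hN.comp (f := fun s : ℝ => (s, x₂)) (by fun_prop)) x₁).hasDerivAt).deriv

theorem d₂_trace (hu : Differentiable ℝ (uncurry₃ u)) (hN : Differentiable ℝ (uncurry N))
    (x₁ x₂ : ℝ) :
    d₂ (trace u N) x₁ x₂ = D₂ u x₁ x₂ (N x₁ x₂) + d₂ N x₁ x₂ * D₃ u x₁ x₂ (N x₁ x₂) :=
  (hasDerivAt_comp_graph (F := fun r y => u x₁ r y) (by fun_prop)
    ((hN.comp (f := fun s : ℝ => (x₁, s)) (by fun_prop)) x₂).hasDerivAt).deriv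

theorem surface_flux (hu : Differentiable ℝ (uncurry₃ u)) (hN : Differentiable ℝ (uncurry N))
    (x₁ x₂ : ℝ) :
    d₁ N x₁ x₂ * flux₁ u x₁ x₂ (N x₁ x₂) + d₂ N x₁ x₂ * flux₂ u x₁ x₂ (N x₁ x₂)
        - flux₃ u x₁ x₂ (N x₁ x₂)
      = -(normalDeriv u N x₁ x₂ * (x₁ * d₁ (trace u N) x₁ x₂ + x₂ * d₂ (trace u N) x₁ x₂))
        + (x₁ * d₁ N x₁ x₂ + x₂ * d₂ N x₁ x₂ - N x₁ x₂)
          * (normalDeriv u N x₁ x₂ * D₃ u x₁ x₂ (N x₁ x₂) - 1 / 2 * gradSq u x₁ x₂ (N x₁ x₂)) := by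
  rw [d₁_trace hu hN, d₂_trace hu hN]
  simp only [flux₁, flux₂, flux₃, normalDeriv, radialDeriv, gradSq]
  ring

theorem integral_flux₁_of_D₁_eq_zero {x₁ x₂ a b : ℝ} (hab : a ≤ b)
    (hwall : ∀ y ∈ Icc a b, D₁ u x₁ x₂ y = 0) :
    ∫ y in a..b, flux₁ u x₁ x₂ y = -(1 / 2) * x₁ * ∫ y in a..b, gradSq u x₁ x₂ y := by
  rw [← intervalIntegral.integral_const_mul]
  refine intervalIntegral.integral_congr fun y hy => ?_
  simp only [flux₁, radialDeriv, hwall y (uIcc_of_le hab ▸ hy)]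
  ring

theorem integral_flux₂_of_D₂_eq_zero {x₁ x₂ a b : ℝ} (hab : a ≤ b)
    (hwall : ∀ y ∈ Icc a b, D₂ u x₁ x₂ y = 0) :
    ∫ y in a..b, flux₂ u x₁ x₂ y = -(1 / 2) * x₂ * ∫ y in a..b, gradSq u x₁ x₂ y := by
  rw [← intervalIntegral.integral_const_mul]
  refine intervalIntegral.integral_congr fun y hy => ?_
  simp only [flux₂, radialDeriv, hwall y (uIcc_of_le hab ▸ hy)]
  ring

variable {L₁ L₂ h : ℝ}

theorem integral_wall₁ (hu : ContDiff ℝ 2 (uncurry₃ u)) (hN : ContDiff ℝ 1 (uncurry N))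
    (hL₁ : 0 ≤ L₁) (hL₂ : 0 ≤ L₂) (hNh : ∀ x₁ ∈ Icc 0 L₁, ∀ x₂ ∈ Icc 0 L₂, -h ≤ N x₁ x₂)
    (hwall : ∀ x₁ ∈ ({0, L₁} : Set ℝ), ∀ x₂ ∈ Icc 0 L₂, ∀ y ∈ Icc (-h) (N x₁ x₂),
      D₁ u x₁ x₂ y = 0) :
    ∫ x₁ in 0..L₁, ∫ x₂ in 0..L₂,
        ((∫ y in -h..N x₁ x₂, D₁ (flux₁ u) x₁ x₂ y) + d₁ N x₁ x₂ * flux₁ u x₁ x₂ (N x₁ x₂))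
      = -(1 / 2) * L₁ * ∫ x₂ in 0..L₂, ∫ y in -h..N L₁ x₂, gradSq u L₁ x₂ y := by
  have hF := (contDiff_flux (n := 1) hu).1
  have := (contDiff_D₁ (n := 0) hF).continuous
  have := continuous_d₁ hN
  rw [integral_integral_swap_of_continuous (by fun_prop) hL₁ hL₂,
    ← intervalIntegral.integral_const_mul]
  refine intervalIntegral.integral_congr fun x₂ hx₂ => ?_
  have hx₂' := uIcc_of_le hL₂ ▸ hx₂
  calc _ = (∫ y in -h..N L₁ x₂, flux₁ u L₁ x₂ y) - ∫ y in -h..N 0 x₂, flux₁ u 0 x₂ y :=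
        (leibniz_integral_rule (G := fun x y => flux₁ u x x₂ y)
          (n := fun x => N x x₂) (by fun_prop) (by fun_prop) (-h) hL₁).symm
    _ = _ := by
      rw [integral_flux₁_of_D₁_eq_zero (hNh L₁ ⟨hL₁, le_rfl⟩ x₂ hx₂') (hwall L₁ (by simp) x₂ hx₂'),
        integral_flux₁_of_D₁_eq_zero (hNh 0 ⟨le_rfl, hL₁⟩ x₂ hx₂') (hwall 0 (by simp) x₂ hx₂')]
      ring

theorem integral_wall₂ (hu : ContDiff ℝ 2 (uncurry₃ u)) (hN : ContDiff ℝ 1 (uncurry N))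
    (hL₁ : 0 ≤ L₁) (hL₂ : 0 ≤ L₂) (hNh : ∀ x₁ ∈ Icc 0 L₁, ∀ x₂ ∈ Icc 0 L₂, -h ≤ N x₁ x₂)
    (hwall : ∀ x₂ ∈ ({0, L₂} : Set ℝ), ∀ x₁ ∈ Icc 0 L₁, ∀ y ∈ Icc (-h) (N x₁ x₂),
      D₂ u x₁ x₂ y = 0) :
    ∫ x₁ in 0..L₁, ∫ x₂ in 0..L₂,
        ((∫ y in -h..N x₁ x₂, D₂ (flux₂ u) x₁ x₂ y) + d₂ N x₁ x₂ * flux₂ u x₁ x₂ (N x₁ x₂))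
      = -(1 / 2) * L₂ * ∫ x₁ in 0..L₁, ∫ y in -h..N x₁ L₂, gradSq u x₁ L₂ y := by
  have hF := (contDiff_flux (n := 1) hu).2.1
  rw [← intervalIntegral.integral_const_mul]
  refine intervalIntegral.integral_congr fun x₁ hx₁ => ?_
  have hx₁' := uIcc_of_le hL₁ ▸ hx₁
  calc _ = (∫ y in -h..N x₁ L₂, flux₂ u x₁ L₂ y) - ∫ y in -h..N x₁ 0, flux₂ u x₁ 0 y :=
        (leibniz_integral_rule (G := fun x y => flux₂ u x₁ x y)
          (n := fun x => N x₁ x) (by fun_prop) (by fun_prop) (-h) hL₂).symm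
    _ = _ := by
      rw [integral_flux₂_of_D₂_eq_zero (hNh x₁ hx₁' L₂ ⟨hL₂, le_rfl⟩) (hwall L₂ (by simp) x₁ hx₁'),
        integral_flux₂_of_D₂_eq_zero (hNh x₁ hx₁' 0 ⟨le_rfl, hL₂⟩) (hwall 0 (by simp) x₁ hx₁')]
      ring

theorem column_identity (hu : ContDiff ℝ 2 (uncurry₃ u)) (hN : Differentiable ℝ (uncurry N))
    {x₁ x₂ : ℝ} (hNh : -h ≤ N x₁ x₂)
    (hΔ : ∀ y ∈ Icc (-h) (N x₁ x₂),
      D₁ (D₁ u) x₁ x₂ y + D₂ (D₂ u) x₁ x₂ y + D₃ (D₃ u) x₁ x₂ y = 0)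
    (hbot : D₃ u x₁ x₂ (-h) = 0) :
    ((∫ y in -h..N x₁ x₂, D₁ (flux₁ u) x₁ x₂ y) + d₁ N x₁ x₂ * flux₁ u x₁ x₂ (N x₁ x₂))
      + ((∫ y in -h..N x₁ x₂, D₂ (flux₂ u) x₁ x₂ y) + d₂ N x₁ x₂ * flux₂ u x₁ x₂ (N x₁ x₂))
      = -(1 / 2) * (∫ y in -h..N x₁ x₂, gradSq u x₁ x₂ y) + 1 / 2 * h * gradSq u x₁ x₂ (-h)
        - normalDeriv u N x₁ x₂ * (x₁ * d₁ (trace u N) x₁ x₂ + x₂ * d₂ (trace u N) x₁ x₂)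
        + (x₁ * d₁ N x₁ x₂ + x₂ * d₂ N x₁ x₂ - N x₁ x₂)
          * (normalDeriv u N x₁ x₂ * D₃ u x₁ x₂ (N x₁ x₂) - 1 / 2 * gradSq u x₁ x₂ (N x₁ x₂)) := by
  obtain ⟨hF₁, hF₂, hF₃⟩ := contDiff_flux (n := 1) hu
  have := (contDiff_D₁ (n := 0) hF₁).continuous
  have := (contDiff_D₂ (n := 0) hF₂).continuous
  have := (contDiff_D₃ (n := 0) hF₃).continuous
  have hdiv : ∫ y in -h..N x₁ x₂,
      (D₁ (flux₁ u) x₁ x₂ y + D₂ (flux₂ u) x₁ x₂ y + D₃ (flux₃ u) x₁ x₂ y)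
        = ∫ y in -h..N x₁ x₂, -(1 / 2) * gradSq u x₁ x₂ y :=
    intervalIntegral.integral_congr fun y hy => by
      rw [div_flux hu, hΔ y (uIcc_of_le hNh ▸ hy)]
      ring
  rw [intervalIntegral.integral_add (Continuous.intervalIntegrable (by fun_prop) _ _)
      (Continuous.intervalIntegrable (by fun_prop) _ _),
    intervalIntegral.integral_add (Continuous.intervalIntegrable (by fun_prop) _ _)
      (Continuous.intervalIntegrable (by fun_prop) _ _),
    intervalIntegral.integral_const_mul] at hdiv
  have hvert : ∫ y in -h..N x₁ x₂, D₃ (flux₃ u) x₁ x₂ y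
      = flux₃ u x₁ x₂ (N x₁ x₂) - flux₃ u x₁ x₂ (-h) :=
    intervalIntegral.integral_eq_sub_of_hasDerivAt
      (fun y _ => hasDerivAt_D₃ (hF₃.differentiable one_ne_zero) x₁ x₂ y)
      (Continuous.intervalIntegrable (by fun_prop) _ _)
  have hbottom : flux₃ u x₁ x₂ (-h) = 1 / 2 * h * gradSq u x₁ x₂ (-h) := by
    simp only [flux₃, radialDeriv, hbot]
    ring
  have := surface_flux (hu.differentiable two_ne_zero) hN x₁ x₂
  linarith

theorem pohozaev_identity (hu : ContDiff ℝ 2 (uncurry₃ u)) (hN : ContDiff ℝ 1 (uncurry N))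
    (hL₁ : 0 ≤ L₁) (hL₂ : 0 ≤ L₂) (hNh : ∀ x₁ ∈ Icc 0 L₁, ∀ x₂ ∈ Icc 0 L₂, -h ≤ N x₁ x₂)
    (hΔ : ∀ x₁ ∈ Icc 0 L₁, ∀ x₂ ∈ Icc 0 L₂, ∀ y ∈ Icc (-h) (N x₁ x₂),
      D₁ (D₁ u) x₁ x₂ y + D₂ (D₂ u) x₁ x₂ y + D₃ (D₃ u) x₁ x₂ y = 0)
    (hwall₁ : ∀ x₁ ∈ ({0, L₁} : Set ℝ), ∀ x₂ ∈ Icc 0 L₂, ∀ y ∈ Icc (-h) (N x₁ x₂),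
      D₁ u x₁ x₂ y = 0)
    (hwall₂ : ∀ x₂ ∈ ({0, L₂} : Set ℝ), ∀ x₁ ∈ Icc 0 L₁, ∀ y ∈ Icc (-h) (N x₁ x₂),
      D₂ u x₁ x₂ y = 0)
    (hbot : ∀ x₁ ∈ Icc 0 L₁, ∀ x₂ ∈ Icc 0 L₂, D₃ u x₁ x₂ (-h) = 0) :
    ∫ x₁ in 0..L₁, ∫ x₂ in 0..L₂,
        normalDeriv u N x₁ x₂ * (x₁ * d₁ (trace u N) x₁ x₂ + x₂ * d₂ (trace u N) x₁ x₂)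
      = 1 / 2 * (L₁ * (∫ x₂ in 0..L₂, ∫ y in -h..N L₁ x₂, gradSq u L₁ x₂ y)
          + L₂ * (∫ x₁ in 0..L₁, ∫ y in -h..N x₁ L₂, gradSq u x₁ L₂ y)
          + h * ∫ x₁ in 0..L₁, ∫ x₂ in 0..L₂, gradSq u x₁ x₂ (-h))
        - 1 / 2 * (∫ x₁ in 0..L₁, ∫ x₂ in 0..L₂, ∫ y in -h..N x₁ x₂, gradSq u x₁ x₂ y)
        + ∫ x₁ in 0..L₁, ∫ x₂ in 0..L₂, (x₁ * d₁ N x₁ x₂ + x₂ * d₂ N x₁ x₂ - N x₁ x₂)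
            * (normalDeriv u N x₁ x₂ * D₃ u x₁ x₂ (N x₁ x₂)
              - 1 / 2 * gradSq u x₁ x₂ (N x₁ x₂)) := by
  obtain ⟨hF₁, hF₂, -⟩ := contDiff_flux (n := 1) hu
  have := (contDiff_D₁ (n := 0) hF₁).continuous
  have := (contDiff_D₂ (n := 0) hF₂).continuous
  have := (contDiff_D₁ (n := 1) hu).continuous
  have := (contDiff_D₂ (n := 1) hu).continuous
  have := (contDiff_D₃ (n := 1) hu).continuous
  have := continuous_d₁ hN
  have := continuous_d₂ hN
  have hu₁ : ContDiff ℝ 1 (uncurry₃ u) := hu.of_le one_le_two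
  have := continuous_d₁ (F := trace u N) (by unfold trace; fun_prop)
  have := continuous_d₂ (F := trace u N) (by unfold trace; fun_prop)
  have hcol := integral_integral_congr hL₁ hL₂ fun x₁ hx₁ x₂ hx₂ =>
    column_identity hu (hN.differentiable one_ne_zero) (hNh x₁ hx₁ x₂ hx₂) (hΔ x₁ hx₁ x₂ hx₂)
      (hbot x₁ hx₁ x₂ hx₂)
  rw [integral_integral_add (by fun_prop) (by fun_prop), integral_wall₁ hu hN hL₁ hL₂ hNh hwall₁,
    integral_wall₂ hu hN hL₁ hL₂ hNh hwall₂] at hcol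
  unfold normalDeriv gradSq at hcol ⊢
  rw [integral_integral_add (by fun_prop) (by fun_prop),
    integral_integral_sub (by fun_prop) (by fun_prop),
    integral_integral_add (by fun_prop) (by fun_prop), integral_integral_const_mul,
    integral_integral_const_mul] at hcol
  linarith

end Pohozaev

variable {L₁ L₂ h g T : ℝ} {η : ℝ → ℝ → ℝ → ℝ} {ϕ : ℝ → ℝ → ℝ → ℝ → ℝ}

theorem psi3T_eq (hϕ : Differentiable ℝ fun p : ℝ × ℝ × ℝ × ℝ => ϕ p.1 p.2.1 p.2.2.1 p.2.2.2)
    (hη : Differentiable ℝ fun p : ℝ × ℝ × ℝ => η p.1 p.2.1 p.2.2) (t x₁ x₂ : ℝ) :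
    psi3T η ϕ t x₁ x₂
      = phiT3 ϕ t x₁ x₂ (η t x₁ x₂) + etaT3 η t x₁ x₂ * phiY3 ϕ t x₁ x₂ (η t x₁ x₂) :=
  (hasDerivAt_comp_graph (F := fun r y => ϕ r x₁ x₂ y) (by fun_prop)
    ((hη.comp (f := fun s : ℝ => (s, x₁, x₂)) (by fun_prop)) t).hasDerivAt).deriv

end WaterWaves

namespace IsWW3D

open WaterWaves

variable {L₁ L₂ h g T : ℝ} {η : ℝ → ℝ → ℝ → ℝ} {ϕ : ℝ → ℝ → ℝ → ℝ → ℝ}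

theorem contDiff_phi (hsol : IsWW3D L₁ L₂ h g T η ϕ) {n : WithTop ℕ∞} (hn : n ≤ ∞) :
    ContDiff ℝ n fun p : ℝ × ℝ × ℝ × ℝ => ϕ p.1 p.2.1 p.2.2.1 p.2.2.2 :=
  hsol.smooth_phi.of_le hn

theorem contDiff_eta (hsol : IsWW3D L₁ L₂ h g T η ϕ) {n : WithTop ℕ∞} (hn : n ≤ ∞) :
    ContDiff ℝ n fun p : ℝ × ℝ × ℝ => η p.1 p.2.1 p.2.2 :=
  hsol.smooth_eta.of_le hn

theorem pohozaev_at_time (hsol : IsWW3D L₁ L₂ h g T η ϕ) (hL₁ : 0 ≤ L₁) (hL₂ : 0 ≤ L₂)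
    (hh : 0 ≤ h) {t : ℝ} (ht : t ∈ Icc 0 T) :
    (∫ x₁ in 0..L₁, ∫ x₂ in 0..L₂,
        etaT3 η t x₁ x₂ * (x₁ * psi3X1 η ϕ t x₁ x₂ + x₂ * psi3X2 η ϕ t x₁ x₂))
      = 1 / 2 * (L₁ * (∫ x₂ in 0..L₂, ∫ y in -h..η t L₁ x₂, gradSq3 ϕ t L₁ x₂ y)
          + L₂ * (∫ x₁ in 0..L₁, ∫ y in -h..η t x₁ L₂, gradSq3 ϕ t x₁ L₂ y)
          + h * ∫ x₁ in 0..L₁, ∫ x₂ in 0..L₂, gradSq3 ϕ t x₁ x₂ (-h))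
        - 1 / 2 * (∫ x₁ in 0..L₁, ∫ x₂ in 0..L₂, ∫ y in -h..η t x₁ x₂, gradSq3 ϕ t x₁ x₂ y)
        + ∫ x₁ in 0..L₁, ∫ x₂ in 0..L₂,
            (x₁ * etaX1 η t x₁ x₂ + x₂ * etaX2 η t x₁ x₂ - η t x₁ x₂)
              * (psi3T η ϕ t x₁ x₂ + g * η t x₁ x₂) := by
  have hϕ := hsol.contDiff_phi (n := 2) (WithTop.coe_le_coe.mpr le_top)
  have hη := hsol.contDiff_eta (n := 1) (WithTop.coe_le_coe.mpr le_top)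
  have hkin : ∀ x₁ ∈ Icc 0 L₁, ∀ x₂ ∈ Icc 0 L₂,
      etaT3 η t x₁ x₂ = normalDeriv (ϕ t) (η t) x₁ x₂ := hsol.kinematic t ht
  have hsurf : ∀ x₁ ∈ Icc 0 L₁, ∀ x₂ ∈ Icc 0 L₂, psi3T η ϕ t x₁ x₂ + g * η t x₁ x₂
      = normalDeriv (ϕ t) (η t) x₁ x₂ * D₃ (ϕ t) x₁ x₂ (η t x₁ x₂)
        - 1 / 2 * gradSq (ϕ t) x₁ x₂ (η t x₁ x₂) := by
    intro x₁ hx₁ x₂ hx₂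
    have hb : phiT3 ϕ t x₁ x₂ (η t x₁ x₂) + 1 / 2 * gradSq (ϕ t) x₁ x₂ (η t x₁ x₂)
        + g * η t x₁ x₂ = 0 := hsol.bernoulli t ht x₁ hx₁ x₂ hx₂
    rw [psi3T_eq (hϕ.differentiable two_ne_zero) (hη.differentiable one_ne_zero),
      hkin x₁ hx₁ x₂ hx₂]
    change _ + _ * D₃ (ϕ t) x₁ x₂ (η t x₁ x₂) + _ = _
    linarith
  calc _ = ∫ x₁ in 0..L₁, ∫ x₂ in 0..L₂, normalDeriv (ϕ t) (η t) x₁ x₂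
        * (x₁ * d₁ (trace (ϕ t) (η t)) x₁ x₂ + x₂ * d₂ (trace (ϕ t) (η t)) x₁ x₂) :=
      integral_integral_congr hL₁ hL₂ fun x₁ hx₁ x₂ hx₂ => by rw [hkin x₁ hx₁ x₂ hx₂]; rfl
    _ = _ := pohozaev_identity (by fun_prop) (by fun_prop) hL₁ hL₂
        (fun x₁ hx₁ x₂ hx₂ => by linarith [hsol.eta_lower t ht x₁ hx₁ x₂ hx₂])
        (hsol.laplace t ht) (hsol.bc_x1 t ht) (hsol.bc_x2 t ht) (hsol.bc_bottom t ht)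
    _ = _ := by
      congr 1
      exact integral_integral_congr hL₁ hL₂ fun x₁ hx₁ x₂ hx₂ => by
        rw [hsurf x₁ hx₁ x₂ hx₂]; rfl

theorem continuous_gradSq3 (hsol : IsWW3D L₁ L₂ h g T η ϕ) :
    Continuous fun p : ℝ × ℝ × ℝ × ℝ => gradSq3 ϕ p.1 p.2.1 p.2.2.1 p.2.2.2 := by
  have := hsol.contDiff_phi (n := 1) (WithTop.coe_le_coe.mpr le_top)
  unfold gradSq3 phiX1 phiX2 phiY3 deriv
  fun_prop

theorem continuous_etaX1 (hsol : IsWW3D L₁ L₂ h g T η ϕ) :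
    Continuous fun p : ℝ × ℝ × ℝ => etaX1 η p.1 p.2.1 p.2.2 := by
  have := hsol.contDiff_eta (n := 1) (WithTop.coe_le_coe.mpr le_top)
  unfold etaX1 deriv
  fun_prop

theorem continuous_etaX2 (hsol : IsWW3D L₁ L₂ h g T η ϕ) :
    Continuous fun p : ℝ × ℝ × ℝ => etaX2 η p.1 p.2.1 p.2.2 := by
  have := hsol.contDiff_eta (n := 1) (WithTop.coe_le_coe.mpr le_top)
  unfold etaX2 deriv
  fun_prop

theorem continuous_psi3T (hsol : IsWW3D L₁ L₂ h g T η ϕ) :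
    Continuous fun p : ℝ × ℝ × ℝ => psi3T η ϕ p.1 p.2.1 p.2.2 := by
  have := hsol.contDiff_phi (n := 1) (WithTop.coe_le_coe.mpr le_top)
  have := hsol.contDiff_eta (n := 1) (WithTop.coe_le_coe.mpr le_top)
  unfold psi3T psi3 deriv
  fun_prop

end IsWW3D

theorem pohozaev_consequence_3d_general
    (L₁ L₂ h g T : ℝ) (hL₁ : 0 < L₁) (hL₂ : 0 < L₂) (hh : 0 < h) (hT : 0 < T)
    (η : ℝ → ℝ → ℝ → ℝ) (ϕ : ℝ → ℝ → ℝ → ℝ → ℝ)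
    (hsol : IsWW3D L₁ L₂ h g T η ϕ) :
    (∫ t in (0:ℝ)..T, ∫ x₁ in (0:ℝ)..L₁, ∫ x₂ in (0:ℝ)..L₂,
        etaT3 η t x₁ x₂ * (x₁ * psi3X1 η ϕ t x₁ x₂ + x₂ * psi3X2 η ϕ t x₁ x₂))
      = bigP L₁ L₂ h T η ϕ
        - 1 / 2 * (∫ t in (0:ℝ)..T, ∫ x₁ in (0:ℝ)..L₁, ∫ x₂ in (0:ℝ)..L₂,
            ∫ y in (-h)..(η t x₁ x₂), gradSq3 ϕ t x₁ x₂ y)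
        + ∫ t in (0:ℝ)..T, ∫ x₁ in (0:ℝ)..L₁, ∫ x₂ in (0:ℝ)..L₂,
            (x₁ * etaX1 η t x₁ x₂ + x₂ * etaX2 η t x₁ x₂ - η t x₁ x₂)
              * (psi3T η ϕ t x₁ x₂ + g * η t x₁ x₂) := by
  have := hsol.continuous_gradSq3
  have := hsol.continuous_etaX1
  have := hsol.continuous_etaX2
  have := hsol.continuous_psi3T
  have := hsol.smooth_eta.continuous
  rw [intervalIntegral.integral_congr fun t ht =>
      hsol.pohozaev_at_time hL₁.le hL₂.le hh.le (uIcc_of_le hT.le ▸ ht),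
    intervalIntegral.integral_add (Continuous.intervalIntegrable (by fun_prop) _ _)
      (Continuous.intervalIntegrable (by fun_prop) _ _),
    intervalIntegral.integral_sub (Continuous.intervalIntegrable (by fun_prop) _ _)
      (Continuous.intervalIntegrable (by fun_prop) _ _),
    intervalIntegral.integral_const_mul, intervalIntegral.integral_const_mul, bigP]

/-- Lemma 4.3 (`d = 2`), consequence of the Pohozaev identity. -/
theorem pohozaev_consequence_3d
    (L₁ L₂ h g T : ℝ) (hL₁ : 0 < L₁) (hL₂ : 0 < L₂) (hh : 0 < h) (hg : 0 < g) (hT : 0 < T)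
    (η : ℝ → ℝ → ℝ → ℝ) (ϕ : ℝ → ℝ → ℝ → ℝ → ℝ)
    (hsol : IsWW3D L₁ L₂ h g T η ϕ) :
    (∫ t in (0:ℝ)..T, ∫ x₁ in (0:ℝ)..L₁, ∫ x₂ in (0:ℝ)..L₂,
        etaT3 η t x₁ x₂ * (x₁ * psi3X1 η ϕ t x₁ x₂ + x₂ * psi3X2 η ϕ t x₁ x₂))
      = bigP L₁ L₂ h T η ϕ
        - 1 / 2 * (∫ t in (0:ℝ)..T, ∫ x₁ in (0:ℝ)..L₁, ∫ x₂ in (0:ℝ)..L₂,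
            ∫ y in (-h)..(η t x₁ x₂), gradSq3 ϕ t x₁ x₂ y)
        + ∫ t in (0:ℝ)..T, ∫ x₁ in (0:ℝ)..L₁, ∫ x₂ in (0:ℝ)..L₂,
            (x₁ * etaX1 η t x₁ x₂ + x₂ * etaX2 η t x₁ x₂ - η t x₁ x₂)
              * (psi3T η ϕ t x₁ x₂ + g * η t x₁ x₂) :=
  pohozaev_consequence_3d_general L₁ L₂ h g T hL₁ hL₂ hh hT η ϕ hsol
end
end

section
/- Let Q = [0,L₁] × [0,L₂] with L₁, L₂ > 0, let h > 0, let η : Q → ℝ be C¹ with η ≥ −h, and set Ω := {(x,y) : x ∈ Q, −h ≤ y ≤ η(x)}. Let u : Ω → ℝ and f = (f₁,f₂) : Ω → ℝ² be C¹. Then ∬_Q u(x,η(x)) dx + ∬_Q f(x,η(x))·∇η(x) dx = ∭_Ω (∂_y u − ∂_{x₁}f₁ − ∂_{x₂}f₂) dy dx + ∬_Q u(x,−h) dx + ∫₀^{L₂}∫₋ₕ^{η(L₁,x₂)} f₁(L₁,x₂,y) dy dx₂ − ∫₀^{L₂}∫₋ₕ^{η(0,x₂)} f₁(0,x₂,y)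 dy dx₂ + ∫₀^{L₁}∫₋ₕ^{η(x₁,L₂)} f₂(x₁,L₂,y) dy dx₁ − ∫₀^{L₁}∫₋ₕ^{η(x₁,0)} f₂(x₁,0,y) dy dx₁. -/
/-!
Integrating `∂_y u` in `y` gives the top and bottom values of `u`. For the horizontal field, the
Leibniz rule `∂_{x₁} ∫_{-h}^{η} f₁ dy = f₁(x, η) ∂_{x₁}η + ∫_{-h}^{η} ∂_{x₁}f₁ dy` turns the
surface term plus the bulk term into an exact `x₁`-derivative, whose integral over `[0, L₁]` is the
lateral flux through `x₁ = 0, L₁`; likewise for `f₂` in `x₂`. The Leibniz rule with a moving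
upper limit is the chain rule for `(x, t) ↦ ∫_c^t G x y dy`, which is differentiable because both
of its partial derivatives are continuous.
-/

open Set Function

section PartialDeriv

variable {E F : Type*} [NormedAddCommGroup E] [NormedSpace ℝ E]
  [NormedAddCommGroup F] [NormedSpace ℝ F] {G : ℝ → E → F}

theorem ContDiff.hasDerivAt_partialDeriv (hG : ContDiff ℝ 1 (uncurry G)) (x : ℝ) (y : E) :
    HasDerivAt (G · y) (deriv (G · y) x) x :=
  ((hG.differentiable one_ne_zero).comp (differentiable_id.prodMk (differentiable_const y))
    x).hasDerivAt

theorem ContDiff.continuous_partialDeriv (hG : ContDiff ℝ 1 (uncurry G)) :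
    Continuous fun p : ℝ × E => deriv (G · p.2) p.1 := by
  have hfderiv : ∀ p : ℝ × E, deriv (G · p.2) p.1 = fderiv ℝ (uncurry G) p (1, 0) := fun p =>
    ((hG.differentiable one_ne_zero p).hasFDerivAt.comp_hasDerivAt (f := fun s => (s, p.2)) p.1
      ((hasDerivAt_id p.1).prodMk (hasDerivAt_const p.1 p.2))).deriv
  simp_rw [hfderiv]
  exact (hG.continuous_fderiv one_ne_zero).clm_apply continuous_const

end PartialDeriv

namespace intervalIntegral

section Leibniz

variable {G G' : ℝ → ℝ → ℝ}

theorem hasDerivAt_integral_of_continuous_deriv (hG : Continuous (uncurry G))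
    (hG' : Continuous (uncurry G')) (hGG' : ∀ x y, HasDerivAt (G · y) (G' x y) x)
    (a b x₀ : ℝ) :
    HasDerivAt (fun x => ∫ y in a..b, G x y) (∫ y in a..b, G' x₀ y) x₀ := by
  obtain ⟨C, hC⟩ : ∃ C, ∀ p ∈ Metric.closedBall x₀ 1 ×ˢ uIcc a b, ‖G' p.1 p.2‖ ≤ C :=
    ((isCompact_closedBall x₀ 1).prod isCompact_uIcc).exists_bound_of_continuousOn
      hG'.continuousOn
  refine (hasDerivAt_integral_of_dominated_loc_of_deriv_le (bound := fun _ => C)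
    (Metric.ball_mem_nhds x₀ one_pos) ?_ ?_ ?_ ?_ intervalIntegrable_const ?_).2
  · exact .of_forall fun x => (hG.uncurry_left x).aestronglyMeasurable.restrict
  · exact (hG.uncurry_left x₀).intervalIntegrable a b
  · exact (hG'.uncurry_left x₀).aestronglyMeasurable.restrict
  · exact .of_forall fun y hy x hx =>
      hC (x, y) ⟨Metric.ball_subset_closedBall hx, uIoc_subset_uIcc hy⟩
  · exact .of_forall fun y _ x _ => hGG' x y

theorem hasStrictFDerivAt_integral_param_upper (hG : Continuous (uncurry G))
    (hG' : Continuous (uncurry G')) (hGG' : ∀ x y, HasDerivAt (G · y) (G' x y) x)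
    (c x₀ t₀ : ℝ) :
    HasStrictFDerivAt (fun p : ℝ × ℝ => ∫ y in c..p.2, G p.1 y)
      ((ContinuousLinearMap.smulRight (1 : ℝ →L[ℝ] ℝ) (∫ y in c..t₀, G' x₀ y)).coprod
        (ContinuousLinearMap.smulRight (1 : ℝ →L[ℝ] ℝ) (G x₀ t₀))) (x₀, t₀) := by
  have hderiv_fst : ∀ p : ℝ × ℝ, HasFDerivAt (fun x => ∫ y in c..p.2, G x y)
      (ContinuousLinearMap.smulRight (1 : ℝ →L[ℝ] ℝ) (∫ y in c..p.2, G' p.1 y)) p.1 := fun p =>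
    (hasDerivAt_integral_of_continuous_deriv hG hG' hGG' c p.2 p.1).hasFDerivAt
  have hderiv_snd : ∀ p : ℝ × ℝ, HasFDerivAt (fun t => ∫ y in c..t, G p.1 y)
      (ContinuousLinearMap.smulRight (1 : ℝ →L[ℝ] ℝ) (G p.1 p.2)) p.2 := fun p =>
    ((hG.uncurry_left p.1).integral_hasStrictDerivAt c p.2).hasDerivAt.hasFDerivAt
  have hcont_fst : Continuous fun p : ℝ × ℝ =>
      ContinuousLinearMap.smulRight (1 : ℝ →L[ℝ] ℝ) (∫ y in c..p.2, G' p.1 y) :=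
    (ContinuousLinearMap.smulRightL ℝ ℝ ℝ 1).continuous.comp
      (continuous_parametric_primitive_of_continuous hG')
  have hcont_snd : Continuous fun p : ℝ × ℝ =>
      ContinuousLinearMap.smulRight (1 : ℝ →L[ℝ] ℝ) (G p.1 p.2) :=
    (ContinuousLinearMap.smulRightL ℝ ℝ ℝ 1).continuous.comp hG
  exact hasStrictFDerivAt_uncurry_coprod (u := (x₀, t₀)) (f := fun x t => ∫ y in c..t, G x y)
    (f₁ := fun x t => ContinuousLinearMap.smulRight (1 : ℝ →L[ℝ] ℝ) (∫ y in c..t, G' x y))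
    (f₂ := fun x t => ContinuousLinearMap.smulRight (1 : ℝ →L[ℝ] ℝ) (G x t))
    (.of_forall hderiv_fst) (.of_forall hderiv_snd) hcont_fst.continuousAt hcont_snd.continuousAt

theorem hasDerivAt_integral_leibniz (hG : Continuous (uncurry G))
    (hG' : Continuous (uncurry G')) (hGG' : ∀ x y, HasDerivAt (G · y) (G' x y) x) (c : ℝ)
    {β : ℝ → ℝ} {β' x₀ : ℝ} (hβ : HasDerivAt β β' x₀) :
    HasDerivAt (fun x => ∫ y in c..β x, G x y)
      (G x₀ (β x₀) * β' + ∫ y in c..β x₀, G' x₀ y) x₀ := by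
  refine ((hasStrictFDerivAt_integral_param_upper hG hG' hGG' c x₀ (β x₀)).hasFDerivAt
    |>.comp_hasDerivAt (f := fun x => (x, β x)) x₀ ((hasDerivAt_id x₀).prodMk hβ)).congr_deriv ?_
  simp [mul_comm, add_comm]

theorem integral_leibniz_eq_sub (hG : Continuous (uncurry G))
    (hG' : Continuous (uncurry G')) (hGG' : ∀ x y, HasDerivAt (G · y) (G' x y) x) (c : ℝ)
    {β β' : ℝ → ℝ} (hβ : Continuous β) (hβ' : Continuous β')
    (hββ' : ∀ x, HasDerivAt β (β' x) x) (a b : ℝ) :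
    ∫ x in a..b, (G x (β x) * β' x + ∫ y in c..β x, G' x y)
      = (∫ y in c..β b, G b y) - ∫ y in c..β a, G a y := by
  refine integral_eq_sub_of_hasDerivAt
    (fun x _ => hasDerivAt_integral_leibniz hG hG' hGG' c (hββ' x))
    (Continuous.intervalIntegrable ?_ a b)
  have : Continuous fun x => ∫ y in c..β x, G' x y :=
    continuous_parametric_intervalIntegral_of_continuous hG' hβ
  fun_prop

end Leibniz

section IteratedIntegral

variable {P Q : ℝ → ℝ → ℝ} {a b c d : ℝ}

theorem integral_integral_add_of_continuous (hP : Continuous (uncurry P))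
    (hQ : Continuous (uncurry Q)) :
    ∫ x in a..b, ∫ y in c..d, (P x y + Q x y)
      = (∫ x in a..b, ∫ y in c..d, P x y) + ∫ x in a..b, ∫ y in c..d, Q x y := by
  rw [← integral_add
    ((continuous_parametric_intervalIntegral_of_continuous' hP c d).intervalIntegrable a b)
    ((continuous_parametric_intervalIntegral_of_continuous' hQ c d).intervalIntegrable a b)]
  exact integral_congr fun x _ => integral_add
    ((hP.uncurry_left x).intervalIntegrable c d) ((hQ.uncurry_left x).intervalIntegrable c d)

theorem integral_integral_sub_of_continuous (hP : Continuous (uncurry P))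
    (hQ : Continuous (uncurry Q)) :
    ∫ x in a..b, ∫ y in c..d, (P x y - Q x y)
      = (∫ x in a..b, ∫ y in c..d, P x y) - ∫ x in a..b, ∫ y in c..d, Q x y := by
  rw [← integral_sub
    ((continuous_parametric_intervalIntegral_of_continuous' hP c d).intervalIntegrable a b)
    ((continuous_parametric_intervalIntegral_of_continuous' hQ c d).intervalIntegrable a b)]
  exact integral_congr fun x _ => integral_sub
    ((hP.uncurry_left x).intervalIntegrable c d) ((hQ.uncurry_left x).intervalIntegrable c d)

theorem integral_integral_swap_of_continuous (hP : Continuous (uncurry P)) :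
    ∫ x in a..b, ∫ y in c..d, P x y = ∫ y in c..d, ∫ x in a..b, P x y :=
  MeasureTheory.intervalIntegral_intervalIntegral_swap <|
    (hP.continuousOn.integrableOn_compact (isCompact_uIcc.prod isCompact_uIcc)).mono_set
      (prod_mono uIoc_subset_uIcc uIoc_subset_uIcc)

end IteratedIntegral

end intervalIntegral

section Flux

variable {F F' : ℝ → ℝ → ℝ → ℝ} {η η' : ℝ → ℝ → ℝ}

theorem integral_integral_flux_snd (hF : Continuous fun p : ℝ × ℝ × ℝ => F p.1 p.2.1 p.2.2)
    (hF' : Continuous fun p : ℝ × ℝ × ℝ => F' p.1 p.2.1 p.2.2)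
    (hFF' : ∀ x₁ x₂ y, HasDerivAt (F x₁ · y) (F' x₁ x₂ y) x₂)
    (hη : Continuous fun p : ℝ × ℝ => η p.1 p.2) (hη' : Continuous fun p : ℝ × ℝ => η' p.1 p.2)
    (hηη' : ∀ x₁ x₂, HasDerivAt (η x₁ ·) (η' x₁ x₂) x₂) (c a₁ b₁ a₂ b₂ : ℝ) :
    (∫ x₁ in a₁..b₁, ∫ x₂ in a₂..b₂, F x₁ x₂ (η x₁ x₂) * η' x₁ x₂)
      + (∫ x₁ in a₁..b₁, ∫ x₂ in a₂..b₂, ∫ y in c..η x₁ x₂, F' x₁ x₂ y)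
      = (∫ x₁ in a₁..b₁, ∫ y in c..η x₁ b₂, F x₁ b₂ y)
        - ∫ x₁ in a₁..b₁, ∫ y in c..η x₁ a₂, F x₁ a₂ y := by
  rw [← intervalIntegral.integral_integral_add_of_continuous (by fun_prop) (by fun_prop),
    ← intervalIntegral.integral_sub (Continuous.intervalIntegrable (by fun_prop) _ _)
      (Continuous.intervalIntegrable (by fun_prop) _ _)]
  exact intervalIntegral.integral_congr fun x₁ _ =>
    intervalIntegral.integral_leibniz_eq_sub (G := F x₁) (by fun_prop) (by fun_prop) (hFF' x₁) c
      (by fun_prop) (by fun_prop) (hηη' x₁) a₂ b₂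

theorem integral_integral_flux_fst (hF : Continuous fun p : ℝ × ℝ × ℝ => F p.1 p.2.1 p.2.2)
    (hF' : Continuous fun p : ℝ × ℝ × ℝ => F' p.1 p.2.1 p.2.2)
    (hFF' : ∀ x₁ x₂ y, HasDerivAt (F · x₂ y) (F' x₁ x₂ y) x₁)
    (hη : Continuous fun p : ℝ × ℝ => η p.1 p.2) (hη' : Continuous fun p : ℝ × ℝ => η' p.1 p.2)
    (hηη' : ∀ x₁ x₂, HasDerivAt (η · x₂) (η' x₁ x₂) x₁) (c a₁ b₁ a₂ b₂ : ℝ) :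
    (∫ x₁ in a₁..b₁, ∫ x₂ in a₂..b₂, F x₁ x₂ (η x₁ x₂) * η' x₁ x₂)
      + (∫ x₁ in a₁..b₁, ∫ x₂ in a₂..b₂, ∫ y in c..η x₁ x₂, F' x₁ x₂ y)
      = (∫ x₂ in a₂..b₂, ∫ y in c..η b₁ x₂, F b₁ x₂ y)
        - ∫ x₂ in a₂..b₂, ∫ y in c..η a₁ x₂, F a₁ x₂ y := by
  rw [intervalIntegral.integral_integral_swap_of_continuous
      (P := fun x₁ x₂ => F x₁ x₂ (η x₁ x₂) * η' x₁ x₂) (by fun_prop),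
    intervalIntegral.integral_integral_swap_of_continuous
      (P := fun x₁ x₂ => ∫ y in c..η x₁ x₂, F' x₁ x₂ y) (by fun_prop)]
  exact integral_integral_flux_snd (F := fun x₂ x₁ y => F x₁ x₂ y)
    (F' := fun x₂ x₁ y => F' x₁ x₂ y) (η := fun x₂ x₁ => η x₁ x₂) (η' := fun x₂ x₁ => η' x₁ x₂)
    (by fun_prop) (by fun_prop) (fun x₂ x₁ y => hFF' x₁ x₂ y) (by fun_prop) (by fun_prop)
    (fun x₂ x₁ => hηη' x₁ x₂) c a₂ b₂ a₁ b₁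

end Flux

theorem divergence_identity_of_hasDerivAt
    {η dη₁ dη₂ : ℝ → ℝ → ℝ} {u du f₁ df₁ f₂ df₂ : ℝ → ℝ → ℝ → ℝ}
    (hη : Continuous fun p : ℝ × ℝ => η p.1 p.2)
    (hdη₁ : Continuous fun p : ℝ × ℝ => dη₁ p.1 p.2)
    (hdη₂ : Continuous fun p : ℝ × ℝ => dη₂ p.1 p.2)
    (hηdη₁ : ∀ x₁ x₂, HasDerivAt (η · x₂) (dη₁ x₁ x₂) x₁)
    (hηdη₂ : ∀ x₁ x₂, HasDerivAt (η x₁ ·) (dη₂ x₁ x₂) x₂)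
    (hu : Continuous fun p : ℝ × ℝ × ℝ => u p.1 p.2.1 p.2.2)
    (hdu : Continuous fun p : ℝ × ℝ × ℝ => du p.1 p.2.1 p.2.2)
    (hudu : ∀ x₁ x₂ y, HasDerivAt (u x₁ x₂ ·) (du x₁ x₂ y) y)
    (hf₁ : Continuous fun p : ℝ × ℝ × ℝ => f₁ p.1 p.2.1 p.2.2)
    (hdf₁ : Continuous fun p : ℝ × ℝ × ℝ => df₁ p.1 p.2.1 p.2.2)
    (hf₁df₁ : ∀ x₁ x₂ y, HasDerivAt (f₁ · x₂ y) (df₁ x₁ x₂ y) x₁)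
    (hf₂ : Continuous fun p : ℝ × ℝ × ℝ => f₂ p.1 p.2.1 p.2.2)
    (hdf₂ : Continuous fun p : ℝ × ℝ × ℝ => df₂ p.1 p.2.1 p.2.2)
    (hf₂df₂ : ∀ x₁ x₂ y, HasDerivAt (f₂ x₁ · y) (df₂ x₁ x₂ y) x₂)
    (c a₁ b₁ a₂ b₂ : ℝ) :
    (∫ x₁ in a₁..b₁, ∫ x₂ in a₂..b₂, u x₁ x₂ (η x₁ x₂))
      + (∫ x₁ in a₁..b₁, ∫ x₂ in a₂..b₂,
          (f₁ x₁ x₂ (η x₁ x₂) * dη₁ x₁ x₂ + f₂ x₁ x₂ (η x₁ x₂) * dη₂ x₁ x₂))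
      = (∫ x₁ in a₁..b₁, ∫ x₂ in a₂..b₂, ∫ y in c..η x₁ x₂,
            (du x₁ x₂ y - df₁ x₁ x₂ y - df₂ x₁ x₂ y))
        + (∫ x₁ in a₁..b₁, ∫ x₂ in a₂..b₂, u x₁ x₂ c)
        + (∫ x₂ in a₂..b₂, ∫ y in c..η b₁ x₂, f₁ b₁ x₂ y)
        - (∫ x₂ in a₂..b₂, ∫ y in c..η a₁ x₂, f₁ a₁ x₂ y)
        + (∫ x₁ in a₁..b₁, ∫ y in c..η x₁ b₂, f₂ x₁ b₂ y)
        - (∫ x₁ in a₁..b₁, ∫ y in c..η x₁ a₂, f₂ x₁ a₂ y) := by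
  have hvertical : ∀ x₁ x₂, ∫ y in c..η x₁ x₂, (du x₁ x₂ y - df₁ x₁ x₂ y - df₂ x₁ x₂ y)
      = (u x₁ x₂ (η x₁ x₂) - u x₁ x₂ c) - (∫ y in c..η x₁ x₂, df₁ x₁ x₂ y)
        - ∫ y in c..η x₁ x₂, df₂ x₁ x₂ y := fun x₁ x₂ => by
    rw [intervalIntegral.integral_sub (Continuous.intervalIntegrable (by fun_prop) _ _)
        (Continuous.intervalIntegrable (by fun_prop) _ _),
      intervalIntegral.integral_sub (Continuous.intervalIntegrable (by fun_prop) _ _)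
        (Continuous.intervalIntegrable (by fun_prop) _ _),
      intervalIntegral.integral_eq_sub_of_hasDerivAt (fun y _ => hudu x₁ x₂ y)
        (Continuous.intervalIntegrable (by fun_prop) _ _)]
  have hflux₁ := integral_integral_flux_fst hf₁ hdf₁ hf₁df₁ hη hdη₁ hηdη₁ c a₁ b₁ a₂ b₂
  have hflux₂ := integral_integral_flux_snd hf₂ hdf₂ hf₂df₂ hη hdη₂ hηdη₂ c a₁ b₁ a₂ b₂
  simp only [hvertical]
  rw [intervalIntegral.integral_integral_add_of_continuous (by fun_prop) (by fun_prop),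
    intervalIntegral.integral_integral_sub_of_continuous (by fun_prop) (by fun_prop),
    intervalIntegral.integral_integral_sub_of_continuous (by fun_prop) (by fun_prop),
    intervalIntegral.integral_integral_sub_of_continuous (by fun_prop) (by fun_prop)]
  linarith

theorem divergence_identity_general
    (L₁ L₂ h : ℝ)
    (η : ℝ → ℝ → ℝ)
    (hη : ContDiff ℝ 1 (fun p : ℝ × ℝ => η p.1 p.2))
    (u f₁ f₂ : ℝ → ℝ → ℝ → ℝ)
    (hu : ContDiff ℝ 1 (fun p : ℝ × ℝ × ℝ => u p.1 p.2.1 p.2.2))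
    (hf₁ : ContDiff ℝ 1 (fun p : ℝ × ℝ × ℝ => f₁ p.1 p.2.1 p.2.2))
    (hf₂ : ContDiff ℝ 1 (fun p : ℝ × ℝ × ℝ => f₂ p.1 p.2.1 p.2.2)) :
    (∫ x₁ in (0:ℝ)..L₁, ∫ x₂ in (0:ℝ)..L₂, u x₁ x₂ (η x₁ x₂))
      + (∫ x₁ in (0:ℝ)..L₁, ∫ x₂ in (0:ℝ)..L₂,
          (f₁ x₁ x₂ (η x₁ x₂) * deriv (fun s => η s x₂) x₁
            + f₂ x₁ x₂ (η x₁ x₂) * deriv (fun s => η x₁ s) x₂))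
      = (∫ x₁ in (0:ℝ)..L₁, ∫ x₂ in (0:ℝ)..L₂, ∫ y in (-h)..(η x₁ x₂),
            (deriv (fun s => u x₁ x₂ s) y
              - deriv (fun s => f₁ s x₂ y) x₁ - deriv (fun s => f₂ x₁ s y) x₂))
        + (∫ x₁ in (0:ℝ)..L₁, ∫ x₂ in (0:ℝ)..L₂, u x₁ x₂ (-h))
        + (∫ x₂ in (0:ℝ)..L₂, ∫ y in (-h)..(η L₁ x₂), f₁ L₁ x₂ y)
        - (∫ x₂ in (0:ℝ)..L₂, ∫ y in (-h)..(η 0 x₂), f₁ 0 x₂ y)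
        + (∫ x₁ in (0:ℝ)..L₁, ∫ y in (-h)..(η x₁ L₂), f₂ x₁ L₂ y)
        - (∫ x₁ in (0:ℝ)..L₁, ∫ y in (-h)..(η x₁ 0), f₂ x₁ 0 y) := by
  have hη₂ : ContDiff ℝ 1 (uncurry fun s t : ℝ => η t s) :=
    hη.comp (f := fun r : ℝ × ℝ => (r.2, r.1)) (by fun_prop)
  have hu₃ : ContDiff ℝ 1 (uncurry fun (s : ℝ) (q : ℝ × ℝ) => u q.1 q.2 s) :=
    hu.comp (f := fun r : ℝ × ℝ × ℝ => (r.2.1, r.2.2, r.1)) (by fun_prop)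
  have hf₁₁ : ContDiff ℝ 1 (uncurry fun (s : ℝ) (q : ℝ × ℝ) => f₁ s q.1 q.2) := hf₁
  have hf₂₂ : ContDiff ℝ 1 (uncurry fun (s : ℝ) (q : ℝ × ℝ) => f₂ q.1 s q.2) :=
    hf₂.comp (f := fun r : ℝ × ℝ × ℝ => (r.2.1, r.1, r.2.2)) (by fun_prop)
  exact divergence_identity_of_hasDerivAt
    hη.continuous hη.continuous_partialDeriv
    (hη₂.continuous_partialDeriv.comp continuous_swap)
    hη.hasDerivAt_partialDeriv (fun x₁ x₂ => hη₂.hasDerivAt_partialDeriv x₂ x₁)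
    hu.continuous
    (hu₃.continuous_partialDeriv.comp (f := fun p : ℝ × ℝ × ℝ => (p.2.2, p.1, p.2.1))
      (by fun_prop))
    (fun x₁ x₂ y => hu₃.hasDerivAt_partialDeriv y (x₁, x₂))
    hf₁.continuous hf₁₁.continuous_partialDeriv
    (fun x₁ x₂ y => hf₁₁.hasDerivAt_partialDeriv x₁ (x₂, y))
    hf₂.continuous
    (hf₂₂.continuous_partialDeriv.comp (f := fun p : ℝ × ℝ × ℝ => (p.2.1, p.1, p.2.2))
      (by fun_prop))
    (fun x₁ x₂ y => hf₂₂.hasDerivAt_partialDeriv x₂ (x₁, y))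
    (-h) 0 L₁ 0 L₂

/-- divergence-type identity (identity (63) in the paper):
for `u` scalar and `f = (f₁,f₂)` a horizontal vector field, both `C¹` on the
fluid domain `Ω = {(x,y) : x ∈ Q, -h ≤ y ≤ η(x)}`, the surface terms equal the
bulk term plus the bottom term plus the lateral fluxes. -/
theorem divergence_identity
    (L₁ L₂ h : ℝ) (hL₁ : 0 < L₁) (hL₂ : 0 < L₂) (hh : 0 < h)
    (η : ℝ → ℝ → ℝ)
    (hη : ContDiff ℝ 1 (fun p : ℝ × ℝ => η p.1 p.2))
    (hηb : ∀ x₁ ∈ Icc (0:ℝ) L₁, ∀ x₂ ∈ Icc (0:ℝ) L₂, -h ≤ η x₁ x₂)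
    (u f₁ f₂ : ℝ → ℝ → ℝ → ℝ)
    (hu : ContDiff ℝ 1 (fun p : ℝ × ℝ × ℝ => u p.1 p.2.1 p.2.2))
    (hf₁ : ContDiff ℝ 1 (fun p : ℝ × ℝ × ℝ => f₁ p.1 p.2.1 p.2.2))
    (hf₂ : ContDiff ℝ 1 (fun p : ℝ × ℝ × ℝ => f₂ p.1 p.2.1 p.2.2)) :
    (∫ x₁ in (0:ℝ)..L₁, ∫ x₂ in (0:ℝ)..L₂, u x₁ x₂ (η x₁ x₂))
      + (∫ x₁ in (0:ℝ)..L₁, ∫ x₂ in (0:ℝ)..L₂,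
          (f₁ x₁ x₂ (η x₁ x₂) * deriv (fun s => η s x₂) x₁
            + f₂ x₁ x₂ (η x₁ x₂) * deriv (fun s => η x₁ s) x₂))
      = (∫ x₁ in (0:ℝ)..L₁, ∫ x₂ in (0:ℝ)..L₂, ∫ y in (-h)..(η x₁ x₂),
            (deriv (fun s => u x₁ x₂ s) y
              - deriv (fun s => f₁ s x₂ y) x₁ - deriv (fun s => f₂ x₁ s y) x₂))
        + (∫ x₁ in (0:ℝ)..L₁, ∫ x₂ in (0:ℝ)..L₂, u x₁ x₂ (-h))
        + (∫ x₂ in (0:ℝ)..L₂, ∫ y in (-h)..(η L₁ x₂), f₁ L₁ x₂ y)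
        - (∫ x₂ in (0:ℝ)..L₂, ∫ y in (-h)..(η 0 x₂), f₁ 0 x₂ y)
        + (∫ x₁ in (0:ℝ)..L₁, ∫ y in (-h)..(η x₁ L₂), f₂ x₁ L₂ y)
        - (∫ x₁ in (0:ℝ)..L₁, ∫ y in (-h)..(η x₁ 0), f₂ x₁ 0 y) :=
  divergence_identity_general L₁ L₂ h η hη u f₁ f₂ hu hf₁ hf₂
end
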